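/- Let c : 𝒳 × 𝒳 → ℝ be a cost function, π a joint distribution of (x, z) with marginal γ on z and conditionals ρ(·|z). Suppose the couplings ξ_z minimizing the expected cost E_γ[E_{ξ_z}[c(x,y)]] subject to ξ_z ∈ Π(ρ(·|z), μ) for a common second marginal μ are supported on measurable maps Q_z, i.e. ξ_z = (id, Q_z)_# ρ(·|z). Then the map T(x,z) := Q_z(x) solves the Monge barycenter problem: T minimizes E_π[c(x, T(x,z))] among all measurable maps S(x,z) such that the law of S(x,z) is independent of z, and the optimal Monge cost equals the optimal Kantorovich cost. -/
import Mathlib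


open MeasureTheory ProbabilityTheory

/-- If the optimal couplings of the extended Wasserstein barycenter problem are
supported on maps `Q z`, then `T (x, z) := Q z x` solves the Monge barycenter
problem (it satisfies the independence constraint and minimizes the cost among
all maps satisfying it), and the optimal Monge cost equals the optimal
Kantorovich cost. -/
theorem monge_barycenter_of_kantorovich_maps
    {𝒳 𝒵 : Type*}
    [TopologicalSpace 𝒳] [PolishSpace 𝒳] [MeasurableSpace 𝒳] [BorelSpace 𝒳]
    [TopologicalSpace 𝒵] [PolishSpace 𝒵] [MeasurableSpace 𝒵] [BorelSpace 𝒵]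
    (c : 𝒳 × 𝒳 → ℝ) (hc : Continuous c) (hcbdd : ∃ C, ∀ p, |c p| ≤ C)
    (γ : Measure 𝒵) [IsProbabilityMeasure γ]
    (κ : Kernel 𝒵 𝒳) [IsMarkovKernel κ]
    (π : Measure (𝒳 × 𝒵))
    (hπ : π = (γ.compProd κ).map Prod.swap)
    -- the candidate optimal barycenter and family of couplings
    (μ : Measure 𝒳) [IsProbabilityMeasure μ]
    (ξ : Kernel 𝒵 (𝒳 × 𝒳)) [IsMarkovKernel ξ]
    (hξfst : ∀ z, (ξ z).fst = κ z) (hξsnd : ∀ z, (ξ z).snd = μ)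
    -- optimality of (μ, ξ) for the Kantorovich barycenter problem
    (hopt : ∀ (μ' : Measure 𝒳), IsProbabilityMeasure μ' →
      ∀ (ξ' : Kernel 𝒵 (𝒳 × 𝒳)), IsMarkovKernel ξ' →
        (∀ z, (ξ' z).fst = κ z) → (∀ z, (ξ' z).snd = μ') →
        ∫ z, ∫ q, c q ∂(ξ z) ∂γ ≤ ∫ z, ∫ q, c q ∂(ξ' z) ∂γ)
    -- the optimal couplings are supported on maps Q z
    (Q : 𝒵 → 𝒳 → 𝒳) (hQ : Measurable (fun p : 𝒳 × 𝒵 => Q p.2 p.1))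
    (hξmap : ∀ z, ξ z = (κ z).map (fun x => (x, Q z x))) :
    -- T (x, z) := Q z x satisfies the independence constraint,
    (π.map (fun p : 𝒳 × 𝒵 => (Q p.2 p.1, p.2)) =
        (π.map (fun p : 𝒳 × 𝒵 => Q p.2 p.1)).prod γ) ∧
    -- T minimizes the Monge cost among maps whose output is independent of z,
    (∀ S : 𝒳 × 𝒵 → 𝒳, Measurable S →
      (π.map (fun p : 𝒳 × 𝒵 => (S p, p.2)) =
          (π.map S).prod γ) →
      ∫ p, c (p.1, Q p.2 p.1) ∂π ≤ ∫ p, c (p.1, S p) ∂π) ∧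
    -- and the optimal Monge cost equals the optimal Kantorovich cost
    ∫ p, c (p.1, Q p.2 p.1) ∂π = ∫ z, ∫ q, c q ∂(ξ z) ∂γ := by
  obtain ⟨C, hC⟩ := hcbdd
  haveI : Nonempty 𝒳 := by
    by_contra h
    rw [not_nonempty_iff] at h
    have h1 : μ Set.univ = 1 := measure_univ
    rw [Set.univ_eq_empty_iff.mpr h, measure_empty] at h1
    exact zero_ne_one h1
  haveI : IsProbabilityMeasure π := by
    rw [hπ]; exact Measure.isProbabilityMeasure_map measurable_swap.aemeasurable
  -- measurability of sections of Q
  have hQz : ∀ z, Measurable (Q z) := fun z =>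
    hQ.comp (measurable_id.prodMk measurable_const)
  -- (κ z).map (Q z) = μ
  have hmapQ : ∀ z, (κ z).map (Q z) = μ := by
    intro z
    have hm : Measurable (fun x : 𝒳 => (x, Q z x)) := measurable_id.prodMk (hQz z)
    have h := hξsnd z
    rw [hξmap z, Measure.snd, Measure.map_map measurable_snd hm] at h
    exact h
  -- generic cost computation for maps
  have hIntGen : ∀ (f : 𝒳 × 𝒵 → 𝒳), Measurable f →
      Integrable (fun q : 𝒵 × 𝒳 => c (q.2, f (q.2, q.1))) (γ.compProd κ) := by
    intro f hf
    have hm : Measurable (fun q : 𝒵 × 𝒳 => c (q.2, f (q.2, q.1))) :=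
      hc.measurable.comp (measurable_snd.prodMk
        (hf.comp (measurable_snd.prodMk measurable_fst)))
    exact (integrable_const C).mono' hm.aestronglyMeasurable
      (Filter.Eventually.of_forall fun q => by
        simpa [Real.norm_eq_abs] using hC (q.2, f (q.2, q.1)))
  have key : ∀ (f : 𝒳 × 𝒵 → 𝒳), Measurable f →
      ∫ p, c (p.1, f p) ∂π = ∫ z, ∫ x, c (x, f (x, z)) ∂(κ z) ∂γ := by
    intro f hf
    have hm : Measurable (fun p : 𝒳 × 𝒵 => c (p.1, f p)) :=
      hc.measurable.comp (measurable_fst.prodMk hf)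
    rw [hπ, integral_map measurable_swap.aemeasurable hm.aestronglyMeasurable]
    exact MeasureTheory.Measure.integral_compProd (hIntGen f hf)
  -- marginal of T
  have hTmarg : π.map (fun p : 𝒳 × 𝒵 => Q p.2 p.1) = μ := by
    ext s hs
    rw [Measure.map_apply hQ hs, hπ,
      Measure.map_apply measurable_swap (hQ hs),
      Measure.compProd_apply (measurable_swap (hQ hs))]
    have h2 : ∀ z, κ z (Prod.mk z ⁻¹'
        (Prod.swap ⁻¹' ((fun p : 𝒳 × 𝒵 => Q p.2 p.1) ⁻¹' s))) = μ s := by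
      intro z
      have h3 : Prod.mk z ⁻¹' (Prod.swap ⁻¹' ((fun p : 𝒳 × 𝒵 => Q p.2 p.1) ⁻¹' s))
          = Q z ⁻¹' s := rfl
      rw [h3, ← Measure.map_apply (hQz z) hs, hmapQ z]
    simp [h2]
  -- independence constraint for T
  have hTindep : π.map (fun p : 𝒳 × 𝒵 => (Q p.2 p.1, p.2)) =
      (π.map (fun p : 𝒳 × 𝒵 => Q p.2 p.1)).prod γ := by
    rw [hTmarg]
    have hTm : Measurable (fun p : 𝒳 × 𝒵 => (Q p.2 p.1, p.2)) :=
      hQ.prodMk measurable_snd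
    ext s hs
    rw [Measure.map_apply hTm hs, hπ,
      Measure.map_apply measurable_swap (hTm hs),
      Measure.compProd_apply (measurable_swap (hTm hs)),
      Measure.prod_apply_symm hs]
    refine lintegral_congr fun z => ?_
    have hsz : MeasurableSet ((fun x : 𝒳 => (x, z)) ⁻¹' s) :=
      (measurable_id.prodMk measurable_const) hs
    have h1 : Prod.mk z ⁻¹' (Prod.swap ⁻¹' ((fun p : 𝒳 × 𝒵 => (Q p.2 p.1, p.2)) ⁻¹' s))
        = Q z ⁻¹' ((fun x : 𝒳 => (x, z)) ⁻¹' s) := rfl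
    rw [h1, ← Measure.map_apply (hQz z) hsz, hmapQ z]
  -- cost identity
  have hcost : ∫ p, c (p.1, Q p.2 p.1) ∂π = ∫ z, ∫ q, c q ∂(ξ z) ∂γ := by
    rw [key (fun p => Q p.2 p.1) hQ]
    refine integral_congr_ae (Filter.Eventually.of_forall fun z => ?_)
    show ∫ x, c (x, Q z x) ∂(κ z) = ∫ q, c q ∂(ξ z)
    have hm : Measurable (fun x : 𝒳 => (x, Q z x)) := measurable_id.prodMk (hQz z)
    rw [hξmap z, integral_map hm.aemeasurable hc.measurable.aestronglyMeasurable]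
  refine ⟨hTindep, ?_, hcost⟩
  -- minimality
  intro S hS hSindep
  set μ' : Measure 𝒳 := π.map S with hμ'
  haveI hμ'prob : IsProbabilityMeasure μ' := Measure.isProbabilityMeasure_map hS.aemeasurable
  -- the coupling kernel induced by S
  have hgm : Measurable (fun q : 𝒵 × 𝒳 => S (q.2, q.1)) :=
    hS.comp (measurable_snd.prodMk measurable_fst)
  set ξ' : Kernel 𝒵 (𝒳 × 𝒳) := κ ⊗ₖ Kernel.deterministic _ hgm with hξ'
  haveI : IsMarkovKernel ξ' := by rw [hξ']; infer_instance
  have hξ'apply : ∀ z (s : Set (𝒳 × 𝒳)), MeasurableSet s →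
      ξ' z s = κ z {x | (x, S (x, z)) ∈ s} :=
    fun z s hs => Kernel.compProd_deterministic_apply hgm hs κ z
  have hSz : ∀ z, Measurable (fun x : 𝒳 => S (x, z)) := fun z =>
    hS.comp (measurable_id.prodMk measurable_const)
  have hξ'eq : ∀ z, ξ' z = (κ z).map (fun x => (x, S (x, z))) := by
    intro z
    have hm : Measurable (fun x : 𝒳 => (x, S (x, z))) := measurable_id.prodMk (hSz z)
    ext s hs
    rw [hξ'apply z s hs, Measure.map_apply hm hs]
    rfl
  have hξ'fst : ∀ z, (ξ' z).fst = κ z := by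
    intro z
    ext s hs
    rw [Measure.fst_apply hs, hξ'apply z _ (measurable_fst hs)]
    simp
  have hξ'snd : ∀ z, (ξ' z).snd = (κ z).map (fun x => S (x, z)) := by
    intro z
    ext s hs
    rw [Measure.snd_apply hs, hξ'apply z _ (measurable_snd hs),
      Measure.map_apply (hSz z) hs]
    rfl
  have hsndK : ∀ z, (Kernel.snd ξ') z = (ξ' z).snd := fun z => Kernel.snd_apply ξ' z
  -- the second marginals equal μ' as measures on the product
  have hcp : γ.compProd (Kernel.snd ξ') = γ.prod μ' := by
    have hSm2 : Measurable (fun p : 𝒳 × 𝒵 => (S p, p.2)) := hS.prodMk measurable_snd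
    have hmeas : Measurable (fun q : 𝒵 × 𝒳 => (q.1, S (q.2, q.1))) :=
      measurable_fst.prodMk hgm
    have h1 : γ.prod μ' = (γ.compProd κ).map (fun q : 𝒵 × 𝒳 => (q.1, S (q.2, q.1))) := by
      rw [← Measure.prod_swap, ← hSindep, hπ,
        Measure.map_map hSm2 measurable_swap,
        Measure.map_map measurable_swap (hSm2.comp measurable_swap)]
      rfl
    ext s hs
    rw [Measure.compProd_apply hs, h1, Measure.map_apply hmeas hs,
      Measure.compProd_apply (hmeas hs)]
    refine lintegral_congr fun z => ?_
    rw [hsndK z, hξ'snd z,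
      Measure.map_apply (hSz z) (measurable_prodMk_left hs)]
    rfl
  -- a.e. identification of the second marginals
  have hae : ∀ᵐ z ∂γ, (Kernel.snd ξ') z = μ' := by
    set ρ : Measure (𝒵 × 𝒳) := γ.prod μ' with hρ
    have hρfst : ρ.fst = γ := Measure.fst_prod
    have h1 : ∀ᵐ z ∂γ, (Kernel.snd ξ') z = ρ.condKernel z := by
      have := eq_condKernel_of_measure_eq_compProd (ρ := ρ) (Kernel.snd ξ')
        (by rw [hρfst, hcp])
      rwa [hρfst] at this
    have h2 : ∀ᵐ z ∂γ, (Kernel.const 𝒵 μ') z = ρ.condKernel z := by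
      have := eq_condKernel_of_measure_eq_compProd (ρ := ρ) (Kernel.const 𝒵 μ')
        (by rw [hρfst, Measure.compProd_const])
      rwa [hρfst] at this
    filter_upwards [h1, h2] with z hz1 hz2
    rw [hz1, ← hz2, Kernel.const_apply]
  classical
  obtain ⟨t, htsub, htm, ht0⟩ :=
    exists_measurable_superset_of_null (ae_iff.mp hae)
  -- the corrected kernel
  set ξ'' : Kernel 𝒵 (𝒳 × 𝒳) :=
    Kernel.piecewise htm (κ ×ₖ Kernel.const 𝒵 μ') ξ' with hξ''
  haveI : IsMarkovKernel ξ'' := by rw [hξ'']; infer_instance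
  have hξ''fst : ∀ z, (ξ'' z).fst = κ z := by
    intro z
    by_cases hz : z ∈ t
    · rw [hξ'', Kernel.piecewise_apply, if_pos hz, Kernel.prod_apply,
        Kernel.const_apply, Measure.fst_prod]
    · rw [hξ'', Kernel.piecewise_apply, if_neg hz]; exact hξ'fst z
  have hξ''snd : ∀ z, (ξ'' z).snd = μ' := by
    intro z
    by_cases hz : z ∈ t
    · rw [hξ'', Kernel.piecewise_apply, if_pos hz, Kernel.prod_apply,
        Kernel.const_apply, Measure.snd_prod]
    · rw [hξ'', Kernel.piecewise_apply, if_neg hz]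
      have hz2 : ¬ ¬ ((Kernel.snd ξ') z = μ') := fun h => hz (htsub h)
      rw [not_not] at hz2
      rw [← hsndK z]
      exact hz2
  -- cost comparison
  calc ∫ p, c (p.1, Q p.2 p.1) ∂π
      = ∫ z, ∫ q, c q ∂(ξ z) ∂γ := hcost
    _ ≤ ∫ z, ∫ q, c q ∂(ξ'' z) ∂γ := hopt μ' hμ'prob ξ'' inferInstance hξ''fst hξ''snd
    _ = ∫ z, ∫ q, c q ∂(ξ' z) ∂γ := by
        refine integral_congr_ae ?_
        have hnt : ∀ᵐ z ∂γ, z ∉ t := by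
          rw [ae_iff]
          simpa using ht0
        filter_upwards [hnt] with z hz
        rw [hξ'', Kernel.piecewise_apply, if_neg hz]
    _ = ∫ p, c (p.1, S p) ∂π := by
        rw [key S hS]
        refine integral_congr_ae (Filter.Eventually.of_forall fun z => ?_)
        show ∫ q, c q ∂(ξ' z) = ∫ x, c (x, S (x, z)) ∂(κ z)
        have hm : Measurable (fun x : 𝒳 => (x, S (x, z))) := measurable_id.prodMk (hSz z)
        rw [hξ'eq z, integral_map hm.aemeasurable hc.measurable.aestronglyMeasurable]
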